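/- Let F be an invertible 3×3 matrix with positive determinant and τ a symmetric 3×3 matrix. Then ‖dev₃(Fᵀ τ F⁻ᵀ)‖ ≥ (1/√2)‖dev₃ τ‖. -/

import Mathlib

/-!
With `P = Fᵀ` we have `(F⁻¹)ᵀ = P⁻¹`, and conjugation preserves the trace, so `dev₃` commutes with
`X ↦ P X P⁻¹`. For symmetric `S` and `B = P S P⁻¹`, `tr(B²) = tr(S²) = ‖S‖²`, while
`‖B‖² - tr(B²) = ½‖B - Bᵀ‖² ≥ 0`. Hence `‖dev₃(Fᵀ τ F⁻ᵀ)‖ ≥ ‖dev₃ τ‖`, so the factor `1/√2` can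
even be dropped.
-/

open Matrix

/-- Deviatoric part: dev₃ X = X − (1/3) tr(X)·𝟙. -/
noncomputable def dev3 (X : Matrix (Fin 3) (Fin 3) ℝ) : Matrix (Fin 3) (Fin 3) ℝ :=
  X - (X.trace / 3) • (1 : Matrix (Fin 3) (Fin 3) ℝ)

/-- Frobenius norm ‖X‖ = √tr(Xᵀ X). -/
noncomputable def fnorm (X : Matrix (Fin 3) (Fin 3) ℝ) : ℝ := Real.sqrt (Xᵀ * X).trace

namespace Matrix

variable {n : Type*} [Fintype n]

theorem trace_transpose_mul_self_nonneg (A : Matrix n n ℝ) : 0 ≤ (Aᵀ * A).trace := by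
  simpa using (posSemidef_conjTranspose_mul_self A).trace_nonneg

theorem trace_mul_self_le_trace_transpose_mul_self (A : Matrix n n ℝ) :
    (A * A).trace ≤ (Aᵀ * A).trace := by
  have h := trace_transpose_mul_self_nonneg (A - Aᵀ)
  have hAA : (Aᵀ * Aᵀ).trace = (A * A).trace := by rw [← transpose_mul, trace_transpose]
  have hAAt : (A * Aᵀ).trace = (Aᵀ * A).trace := trace_mul_comm _ _
  simp only [transpose_sub, transpose_transpose, sub_mul, mul_sub, trace_sub, hAA, hAAt] at h
  linarith

variable [DecidableEq n] {P : Matrix n n ℝ}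

theorem conj_mul_conj (hP : IsUnit P) (X Y : Matrix n n ℝ) :
    P * X * P⁻¹ * (P * Y * P⁻¹) = P * (X * Y) * P⁻¹ := by
  simp only [Matrix.mul_assoc, nonsing_inv_mul_cancel_left _ _ ((isUnit_iff_isUnit_det P).mp hP)]

theorem trace_transpose_mul_self_le_conj (hP : IsUnit P) {S : Matrix n n ℝ} (hS : S.IsSymm) :
    (Sᵀ * S).trace ≤ ((P * S * P⁻¹)ᵀ * (P * S * P⁻¹)).trace :=
  calc (Sᵀ * S).trace = (P * S * P⁻¹ * (P * S * P⁻¹)).trace := by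
        rw [conj_mul_conj hP, trace_conj hP, hS.eq]
    _ ≤ _ := trace_mul_self_le_trace_transpose_mul_self _

end Matrix

theorem dev3_isSymm {X : Matrix (Fin 3) (Fin 3) ℝ} (hX : X.IsSymm) : (dev3 X).IsSymm := by
  simp [IsSymm, dev3, hX.eq]

theorem dev3_conj {P : Matrix (Fin 3) (Fin 3) ℝ} (hP : IsUnit P) (X : Matrix (Fin 3) (Fin 3) ℝ) :
    dev3 (P * X * P⁻¹) = P * dev3 X * P⁻¹ := by
  rw [dev3, dev3, trace_conj hP, Matrix.mul_sub, Matrix.sub_mul, Matrix.mul_smul, Matrix.smul_mul,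
    Matrix.mul_one, mul_nonsing_inv _ ((isUnit_iff_isUnit_det P).mp hP)]

theorem fnorm_le_fnorm_conj {P S : Matrix (Fin 3) (Fin 3) ℝ} (hP : IsUnit P) (hS : S.IsSymm) :
    fnorm S ≤ fnorm (P * S * P⁻¹) :=
  Real.sqrt_le_sqrt (trace_transpose_mul_self_le_conj hP hS)

/-- For `F` with positive determinant and symmetric `τ`:
‖dev₃(Fᵀ τ F⁻ᵀ)‖ ≥ (1/√2)‖dev₃ τ‖. -/
theorem fnorm_dev3_conj_ge (F τ : Matrix (Fin 3) (Fin 3) ℝ)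
    (hF : 0 < F.det) (hτ : τᵀ = τ) :
    fnorm (dev3 (Fᵀ * τ * (F⁻¹)ᵀ)) ≥ (1 / Real.sqrt 2) * fnorm (dev3 τ) := by
  have hFt : IsUnit Fᵀ := (isUnit_iff_isUnit_det _).mpr (by simpa using hF.ne')
  have hcoef : 1 / Real.sqrt 2 ≤ 1 := by
    rw [div_le_one (by positivity)]
    exact Real.one_le_sqrt.mpr one_le_two
  rw [transpose_nonsing_inv, dev3_conj hFt]
  calc 1 / Real.sqrt 2 * fnorm (dev3 τ) ≤ fnorm (dev3 τ) :=
        mul_le_of_le_one_left (Real.sqrt_nonneg _) hcoef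
    _ ≤ fnorm (Fᵀ * dev3 τ * Fᵀ⁻¹) := fnorm_le_fnorm_conj hFt (dev3_isSymm hτ)
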